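/- arXiv:2111.10102 — 5 statements merged into one kernel-verified Lean document; each statement's English description precedes it below -/
import Mathlib

section
/- Let N := 𝔗 − D⁻¹ + I. Then 𝒵 satisfies the four Penrose equations with respect to N: N·𝒵·N = N, 𝒵·N·𝒵 = 𝒵, (𝒵·N)ᵀ = 𝒵·N, and (N·𝒵)ᵀ = N·𝒵. In other words, 𝒵 is the Moore–Penrose pseudoinverse of N, so that Z = Π^{-1/2} N† Π^{1/2}. -/
open Matrix Finset Filter Topology

/-- The all-ones n×n matrix `J = e eᵀ`. -/
noncomputable def Jmat (n : ℕ) : Matrix (Fin n) (Fin n) ℝ :=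
  Matrix.of fun _ _ => (1 : ℝ)

/-- `Π^{1/2}`: the diagonal matrix with entries `√(π_i)`. -/
noncomputable def Pih (n : ℕ) (pv : Fin n → ℝ) : Matrix (Fin n) (Fin n) ℝ :=
  Matrix.diagonal fun i => Real.sqrt (pv i)

/-- `Π^{-1/2}`: the diagonal matrix with entries `1/√(π_i)`. -/
noncomputable def Pinvh (n : ℕ) (pv : Fin n → ℝ) : Matrix (Fin n) (Fin n) ℝ :=
  Matrix.diagonal fun i => (Real.sqrt (pv i))⁻¹

/-- with `N := 𝔗 − D⁻¹ + I`, `𝒵` satisfies the four Penrose equations for `N`,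
hence (by uniqueness of the Moore–Penrose pseudoinverse) `𝒵 = N†` and
`Z = Π^{-1/2} N† Π^{1/2}`. -/
theorem diglacian_fundamental_matrix_pseudoinverse {n : ℕ} (hn : 1 ≤ n)
    (P : Matrix (Fin n) (Fin n) ℝ)
    (hP_nonneg : ∀ i j, 0 ≤ P i j) (hP_row : ∀ i, ∑ j, P i j = 1)
    (pv : Fin n → ℝ) (hpv_pos : ∀ i, 0 < pv i) (hpv_sum : ∑ i, pv i = 1)
    (hpv_stat : Matrix.vecMul pv P = pv)
    (hM : IsUnit (1 - P + Jmat n * Matrix.diagonal pv))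
    (d : Fin n → ℝ) (hd_pos : ∀ i, 0 < d i) :
    let Z := (1 - P + Jmat n * Matrix.diagonal pv)⁻¹ - Jmat n * Matrix.diagonal pv
    let Dinv := (Matrix.diagonal d)⁻¹
    let T := Pih n pv * (Dinv - P) * Pinvh n pv
    let Zc := Pih n pv * Z * Pinvh n pv
    let N := T - Dinv + 1
    N * Zc * N = N ∧ Zc * N * Zc = Zc ∧ (Zc * N)ᵀ = Zc * N ∧ (N * Zc)ᵀ = N * Zc ∧
      ∀ W : Matrix (Fin n) (Fin n) ℝ,
        (N * W * N = N ∧ W * N * W = W ∧ (W * N)ᵀ = W * N ∧ (N * W)ᵀ = N * W) →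
        Z = Pinvh n pv * W * Pih n pv := by
  intro Z Dinv T Zc N
  set A := Pih n pv with hAdef
  set B := Pinvh n pv with hBdef
  have hsq : ∀ i, Real.sqrt (pv i) ≠ 0 := fun i =>
    ne_of_gt (Real.sqrt_pos.mpr (hpv_pos i))
  have hAB : A * B = 1 := by
    rw [hAdef, hBdef, Pih, Pinvh, Matrix.diagonal_mul_diagonal]
    rw [show (fun i => Real.sqrt (pv i) * (Real.sqrt (pv i))⁻¹) = fun _ => (1 : ℝ) from
      funext fun i => mul_inv_cancel₀ (hsq i), Matrix.diagonal_one]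
  have hBA : B * A = 1 := by
    rw [hAdef, hBdef, Pih, Pinvh, Matrix.diagonal_mul_diagonal]
    rw [show (fun i => (Real.sqrt (pv i))⁻¹ * Real.sqrt (pv i)) = fun _ => (1 : ℝ) from
      funext fun i => inv_mul_cancel₀ (hsq i), Matrix.diagonal_one]
  -- Dinv is diagonal and commutes with A, B
  have hDinv : Dinv = Matrix.diagonal (Ring.inverse d) := Matrix.inv_diagonal d
  have hADinv : A * Dinv = Dinv * A := by
    rw [hDinv, hAdef, Pih, Matrix.diagonal_mul_diagonal, Matrix.diagonal_mul_diagonal]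
    rw [show (fun i => Real.sqrt (pv i) * Ring.inverse d i)
        = fun i => Ring.inverse d i * Real.sqrt (pv i) from funext fun i => mul_comm _ _]
  -- N = A * (1 - P) * B
  have hN : N = A * (1 - P) * B := by
    show T - Dinv + 1 = A * (1 - P) * B
    have hT : T = Dinv - A * P * B := by
      show A * (Dinv - P) * B = _
      rw [Matrix.mul_sub, Matrix.sub_mul, hADinv, Matrix.mul_assoc Dinv A B, hAB,
        Matrix.mul_one]
    rw [hT, Matrix.mul_sub A 1 P, Matrix.mul_one, Matrix.sub_mul, hAB]
    abel
  -- the matrix Q = JΠ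
  set Q := Jmat n * Matrix.diagonal pv with hQdef
  have hQentry : ∀ i j, Q i j = pv j := by
    intro i j
    rw [hQdef, Matrix.mul_apply]
    simp [Jmat, Matrix.diagonal_apply]
  have hQP : Q * P = Q := by
    ext i j
    rw [Matrix.mul_apply]
    simp only [hQentry]
    have := congrFun hpv_stat j
    simpa [Matrix.vecMul, dotProduct] using this
  have hPQ : (1 - P) * Q = 0 := by
    ext i j
    rw [Matrix.mul_apply]
    simp only [hQentry, Matrix.zero_apply, Matrix.sub_apply, Matrix.one_apply]
    rw [← Finset.sum_mul]
    have : (∑ k, ((if i = k then (1:ℝ) else 0) - P i k)) = 0 := by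
      rw [Finset.sum_sub_distrib, hP_row i]
      simp
    rw [this, zero_mul]
  have hQQ : Q * Q = Q := by
    ext i j
    rw [Matrix.mul_apply]
    simp only [hQentry]
    rw [← Finset.sum_mul, hpv_sum, one_mul]
  set M := 1 - P + Q with hMdef
  have hMl : M⁻¹ * M = 1 := Matrix.nonsing_inv_mul M ((Matrix.isUnit_iff_isUnit_det M).mp hM)
  have hMr : M * M⁻¹ = 1 := Matrix.mul_nonsing_inv M ((Matrix.isUnit_iff_isUnit_det M).mp hM)
  have hMQ : M * Q = Q := by
    rw [hMdef, Matrix.add_mul, hPQ, hQQ, zero_add]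
  have hQM : Q * M = Q := by
    rw [hMdef, Matrix.mul_add, Matrix.mul_sub, Matrix.mul_one, hQP, sub_self, zero_add, hQQ]
  have hinvQ : M⁻¹ * Q = Q := by
    calc M⁻¹ * Q = M⁻¹ * (M * Q) := by rw [hMQ]
    _ = (M⁻¹ * M) * Q := by rw [Matrix.mul_assoc]
    _ = Q := by rw [hMl, Matrix.one_mul]
  have hQinv : Q * M⁻¹ = Q := by
    calc Q * M⁻¹ = (Q * M) * M⁻¹ := by rw [hQM]
    _ = Q * (M * M⁻¹) := by rw [Matrix.mul_assoc]
    _ = Q := by rw [hMr, Matrix.mul_one]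
  have hZdef : Z = M⁻¹ - Q := rfl
  have hZQ : Z * Q = 0 := by rw [hZdef, Matrix.sub_mul, hinvQ, hQQ, sub_self]
  have hQZ : Q * Z = 0 := by rw [hZdef, Matrix.mul_sub, hQinv, hQQ, sub_self]
  have h1P : (1 : Matrix (Fin n) (Fin n) ℝ) - P = M - Q := by rw [hMdef]; abel
  have hZP : Z * (1 - P) = 1 - Q := by
    rw [h1P, Matrix.mul_sub, hZQ, sub_zero, hZdef, Matrix.sub_mul, hMl, hQM]
  have hPZ : (1 - P) * Z = 1 - Q := by
    rw [h1P, Matrix.sub_mul, hQZ, sub_zero, hZdef, Matrix.mul_sub, hMr, hMQ]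
  -- core Penrose identities for (1 - P) and Z
  have hQ1P : Q * (1 - P) = 0 := by
    rw [Matrix.mul_sub, Matrix.mul_one, hQP, sub_self]
  have e1' : (1 - P) * Z * (1 - P) = 1 - P := by
    rw [hPZ, Matrix.sub_mul, Matrix.one_mul, hQ1P, sub_zero]
  have e2' : Z * (1 - P) * Z = Z := by
    rw [hZP, Matrix.sub_mul, Matrix.one_mul, hQZ, sub_zero]
  -- transfer through conjugation
  have hZc : Zc = A * Z * B := rfl
  have hmul : ∀ X Y : Matrix (Fin n) (Fin n) ℝ,
      (A * X * B) * (A * Y * B) = A * (X * Y) * B := by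
    intro X Y
    simp only [Matrix.mul_assoc]
    rw [← Matrix.mul_assoc B A, hBA, Matrix.one_mul]
  have e1 : N * Zc * N = N := by
    rw [hN, hZc, hmul, hmul, e1']
  have e2 : Zc * N * Zc = Zc := by
    rw [hN, hZc, hmul, hmul, e2']
  -- symmetry: Zc * N = N * Zc = 1 - A * Jmat n * A
  have hdB : Matrix.diagonal pv * B = A := by
    rw [hBdef, hAdef, Pinvh, Pih, Matrix.diagonal_mul_diagonal]
    have : (fun i => pv i * (Real.sqrt (pv i))⁻¹) = fun i => Real.sqrt (pv i) :=
      funext fun i => by rw [← div_eq_mul_inv, Real.div_sqrt]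
    rw [this]
  have hAQB : A * Q * B = A * Jmat n * A := by
    rw [hQdef, ← Matrix.mul_assoc A (Jmat n) (Matrix.diagonal pv),
      Matrix.mul_assoc (A * Jmat n) (Matrix.diagonal pv) B, hdB]
  have hsymQ : (A * Jmat n * A)ᵀ = A * Jmat n * A := by
    rw [Matrix.transpose_mul, Matrix.transpose_mul]
    have hJ : (Jmat n)ᵀ = Jmat n := by ext i j; rfl
    rw [hJ, hAdef, Pih, Matrix.diagonal_transpose, Matrix.mul_assoc]
  have hZcN : Zc * N = 1 - A * Jmat n * A := by
    rw [hZc, hN, hmul, hZP, Matrix.mul_sub, Matrix.sub_mul, Matrix.mul_one, hAB, hAQB]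
  have hNZc : N * Zc = 1 - A * Jmat n * A := by
    rw [hZc, hN, hmul, hPZ, Matrix.mul_sub, Matrix.sub_mul, Matrix.mul_one, hAB, hAQB]
  have e3 : (Zc * N)ᵀ = Zc * N := by
    rw [hZcN, Matrix.transpose_sub, Matrix.transpose_one, hsymQ]
  have e4 : (N * Zc)ᵀ = N * Zc := by
    rw [hNZc, Matrix.transpose_sub, Matrix.transpose_one, hsymQ]
  refine ⟨e1, e2, e3, e4, ?_⟩
  -- uniqueness of the pseudoinverse
  rintro W ⟨p1, p2, p3, p4⟩
  have hNW : N * W = N * Zc := by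
    calc N * W = (N * W)ᵀ := p4.symm
    _ = Wᵀ * Nᵀ := Matrix.transpose_mul N W
    _ = Wᵀ * (N * Zc * N)ᵀ := by rw [e1]
    _ = Wᵀ * (Nᵀ * (N * Zc)ᵀ) := by rw [Matrix.transpose_mul (N * Zc) N]
    _ = (Wᵀ * Nᵀ) * (N * Zc)ᵀ := (Matrix.mul_assoc Wᵀ Nᵀ ((N * Zc)ᵀ)).symm
    _ = (N * W)ᵀ * (N * Zc) := by rw [← Matrix.transpose_mul N W, e4]
    _ = (N * W) * (N * Zc) := by rw [p4]
    _ = (N * W * N) * Zc := by simp only [Matrix.mul_assoc]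
    _ = N * Zc := by rw [p1]
  have hWN : W * N = Zc * N := by
    calc W * N = (W * N)ᵀ := p3.symm
    _ = Nᵀ * Wᵀ := Matrix.transpose_mul W N
    _ = (N * Zc * N)ᵀ * Wᵀ := by rw [e1]
    _ = (Nᵀ * (N * Zc)ᵀ) * Wᵀ := by rw [Matrix.transpose_mul (N * Zc) N]
    _ = (Nᵀ * (Zcᵀ * Nᵀ)) * Wᵀ := by rw [Matrix.transpose_mul N Zc]
    _ = ((Nᵀ * Zcᵀ) * Nᵀ) * Wᵀ := by rw [← Matrix.mul_assoc Nᵀ Zcᵀ Nᵀ]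
    _ = (Zc * N)ᵀ * (Nᵀ * Wᵀ) := by rw [Matrix.transpose_mul Zc N, Matrix.mul_assoc]
    _ = (Zc * N) * (W * N)ᵀ := by rw [e3, ← Matrix.transpose_mul W N]
    _ = (Zc * N) * (W * N) := by rw [p3]
    _ = Zc * (N * W * N) := by simp only [Matrix.mul_assoc]
    _ = Zc * N := by rw [p1]
  have hW : W = Zc := by
    calc W = W * N * W := p2.symm
    _ = (Zc * N) * W := by rw [hWN]
    _ = Zc * (N * W) := Matrix.mul_assoc Zc N W
    _ = Zc * (N * Zc) := by rw [hNW]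
    _ = Zc * N * Zc := (Matrix.mul_assoc Zc N Zc).symm
    _ = Zc := e2
  rw [hW, hZc]
  calc Z = (B * A) * Z * (B * A) := by rw [hBA, Matrix.one_mul, Matrix.mul_one]
  _ = B * (A * Z * B) * A := by simp only [Matrix.mul_assoc]
end

section
/- 𝒵 + 𝒥 is a two-sided inverse of 𝔗 + 𝒥 − D⁻¹ + I; that is, (𝔗 + 𝒥 − D⁻¹ + I)(𝒵 + 𝒥) = I and (𝒵 + 𝒥)(𝔗 + 𝒥 − D⁻¹ + I) = I. -/
open Matrix Finset Filter Topology

/-!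
The identity is a similarity: with `M = I − P + JΠ`, conjugation by `Π^{1/2}` sends `M` to
`𝔗 + 𝒥 − D⁻¹ + I` and `M⁻¹ = Z + JΠ` to `𝒵 + 𝒥`, because diagonal matrices commute with
`Π^{1/2}` and `JΠ Π^{-1/2} = J Π^{1/2}`.
-/

theorem conj_mul_conj_eq_one {M : Type*} [Monoid M] {s t a b : M}
    (hst : s * t = 1) (hts : t * s = 1) (hab : a * b = 1) :
    s * a * t * (s * b * t) = 1 := by
  calc s * a * t * (s * b * t) = s * a * (t * s) * b * t := by simp only [mul_assoc]
    _ = 1 := by rw [hts, mul_one, mul_assoc s a b, hab, mul_one, hst]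

section Conjugation

variable {n : ℕ} {pv : Fin n → ℝ}

theorem Pih_mul_Pinvh (hpv : ∀ i, 0 < pv i) : Pih n pv * Pinvh n pv = 1 := by
  simp only [Pih, Pinvh, diagonal_mul_diagonal,
    fun i => mul_inv_cancel₀ (Real.sqrt_ne_zero'.2 (hpv i)), diagonal_one]

theorem Pinvh_mul_Pih (hpv : ∀ i, 0 < pv i) : Pinvh n pv * Pih n pv = 1 := by
  simp only [Pih, Pinvh, diagonal_mul_diagonal,
    fun i => inv_mul_cancel₀ (Real.sqrt_ne_zero'.2 (hpv i)), diagonal_one]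

theorem Pih_mul_Pih (hpv : ∀ i, 0 ≤ pv i) : Pih n pv * Pih n pv = diagonal pv := by
  simp only [Pih, diagonal_mul_diagonal, fun i => Real.mul_self_sqrt (hpv i)]

theorem Pih_mul_mul_Pinvh_of_commute (hpv : ∀ i, 0 < pv i) {X : Matrix (Fin n) (Fin n) ℝ}
    (hX : Commute (Pih n pv) X) : Pih n pv * X * Pinvh n pv = X := by
  rw [hX.eq, Matrix.mul_assoc, Pih_mul_Pinvh hpv, Matrix.mul_one]

theorem Pih_mul_mul_diagonal_mul_Pinvh (hpv : ∀ i, 0 < pv i) (X : Matrix (Fin n) (Fin n) ℝ) :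
    Pih n pv * (X * diagonal pv) * Pinvh n pv = Pih n pv * X * Pih n pv := by
  rw [← Pih_mul_Pih fun i => (hpv i).le]
  simp only [Matrix.mul_assoc, Pih_mul_Pinvh hpv, Matrix.mul_one]

end Conjugation

theorem Zc_add_Jc_two_sided_inverse_general {n : ℕ}
    (P : Matrix (Fin n) (Fin n) ℝ)
    (pv : Fin n → ℝ) (hpv_pos : ∀ i, 0 < pv i)
    (hM : IsUnit (1 - P + Jmat n * Matrix.diagonal pv))
    (d : Fin n → ℝ) :
    let Z := (1 - P + Jmat n * Matrix.diagonal pv)⁻¹ - Jmat n * Matrix.diagonal pv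
    let Dinv := (Matrix.diagonal d)⁻¹
    let T := Pih n pv * (Dinv - P) * Pinvh n pv
    let Zc := Pih n pv * Z * Pinvh n pv
    let Jc := Pih n pv * Jmat n * Pih n pv
    (T + Jc - Dinv + 1) * (Zc + Jc) = 1 ∧ (Zc + Jc) * (T + Jc - Dinv + 1) = 1 := by
  set M := 1 - P + Jmat n * Matrix.diagonal pv
  intro Z Dinv T Zc Jc
  have hJc : Pih n pv * (Jmat n * diagonal pv) * Pinvh n pv = Jc :=
    Pih_mul_mul_diagonal_mul_Pinvh hpv_pos _
  have hDinv : Pih n pv * Dinv * Pinvh n pv = Dinv := by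
    refine Pih_mul_mul_Pinvh_of_commute hpv_pos ?_
    simp only [Dinv, Pih, inv_diagonal, commute_diagonal]
  have hA : T + Jc - Dinv + 1 = Pih n pv * M * Pinvh n pv := by
    simp only [T, M, Matrix.mul_sub, Matrix.sub_mul, Matrix.mul_add, Matrix.add_mul,
      Matrix.mul_one, Pih_mul_Pinvh hpv_pos, hJc, hDinv]
    abel
  have hB : Zc + Jc = Pih n pv * M⁻¹ * Pinvh n pv := by
    simp only [Zc, Z, Matrix.mul_sub, Matrix.sub_mul, hJc, sub_add_cancel]
  have hdet : IsUnit M.det := (isUnit_iff_isUnit_det M).1 hM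
  have hst := Pih_mul_Pinvh hpv_pos
  have hts := Pinvh_mul_Pih hpv_pos
  rw [hA, hB]
  exact ⟨conj_mul_conj_eq_one hst hts (mul_nonsing_inv M hdet),
    conj_mul_conj_eq_one hst hts (nonsing_inv_mul M hdet)⟩

/-- `𝒵 + 𝒥` is a two-sided inverse of `𝔗 + 𝒥 − D⁻¹ + I`. -/
theorem Zc_add_Jc_two_sided_inverse {n : ℕ} (hn : 1 ≤ n)
    (P : Matrix (Fin n) (Fin n) ℝ)
    (hP_nonneg : ∀ i j, 0 ≤ P i j) (hP_row : ∀ i, ∑ j, P i j = 1)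
    (pv : Fin n → ℝ) (hpv_pos : ∀ i, 0 < pv i) (hpv_sum : ∑ i, pv i = 1)
    (hpv_stat : Matrix.vecMul pv P = pv)
    (hM : IsUnit (1 - P + Jmat n * Matrix.diagonal pv))
    (d : Fin n → ℝ) (hd_pos : ∀ i, 0 < d i) :
    let Z := (1 - P + Jmat n * Matrix.diagonal pv)⁻¹ - Jmat n * Matrix.diagonal pv
    let Dinv := (Matrix.diagonal d)⁻¹
    let T := Pih n pv * (Dinv - P) * Pinvh n pv
    let Zc := Pih n pv * Z * Pinvh n pv
    let Jc := Pih n pv * Jmat n * Pih n pv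
    (T + Jc - Dinv + 1) * (Zc + Jc) = 1 ∧ (Zc + Jc) * (T + Jc - Dinv + 1) = 1 :=
  Zc_add_Jc_two_sided_inverse_general P pv hpv_pos hM d
end

section
/- Suppose the partial sums Σ_{t=0}^{T} (P^t − eπᵀ) converge (entrywise, equivalently in the topology of n×n real matrices) to a matrix Z₀ as T → ∞. Then the matrix I − P + JΠ is invertible and Z₀ = (I − P + JΠ)⁻¹ − JΠ. -/
open Matrix Finset Filter Topology

/-!
Put `E = eπᵀ = JΠ` and `Q = P - E`. Since `PE = EP = E² = E`, we get `Qᵗ = Pᵗ - E` for `t ≥ 1`, so the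
given partial sums are the geometric partial sums of `Q` minus `E`, and `I - P + JΠ = 1 - Q`.
A convergent geometric series `∑ Qᵗ = Z₀ + E` satisfies `(1 - Q)(Z₀ + E) = 1`, since
`(1 - Q) ∑_{t<T} Qᵗ = 1 - Q^T` and the terms `Q^T` of a convergent series tend to `0`.
-/

theorem Filter.Tendsto.tendsto_zero_of_tendsto_sum_range {G : Type*} [AddCommGroup G]
    [TopologicalSpace G] [IsTopologicalAddGroup G] {f : ℕ → G} {s : G}
    (h : Tendsto (fun T => ∑ t ∈ range T, f t) atTop (𝓝 s)) : Tendsto f atTop (𝓝 0) := by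
  have hshift : Tendsto (fun T => ∑ t ∈ range (T + 1), f t) atTop (𝓝 s) :=
    (tendsto_add_atTop_iff_nat 1).2 h
  simpa [sum_range_succ] using hshift.sub h

theorem one_sub_mul_eq_one_of_tendsto_geom_sum {R : Type*} [Ring R] [TopologicalSpace R]
    [IsTopologicalRing R] [T2Space R] {q s : R}
    (h : Tendsto (fun T => ∑ t ∈ range T, q ^ t) atTop (𝓝 s)) : (1 - q) * s = 1 := by
  have hpow : Tendsto (fun T => q ^ T) atTop (𝓝 0) := h.tendsto_zero_of_tendsto_sum_range
  have hlim : Tendsto (fun T => (1 - q) * ∑ t ∈ range T, q ^ t) atTop (𝓝 1) := by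
    simpa [mul_neg_geom_sum] using tendsto_const_nhds.sub hpow
  exact tendsto_nhds_unique (h.const_mul (1 - q)) hlim

section Idempotent

variable {R : Type*} [Ring R] {p q e : R}

theorem add_pow_succ_of_mul_eq_zero (hqe : q * e = 0) (heq : e * q = 0) (hee : e * e = e)
    (t : ℕ) : (q + e) ^ (t + 1) = q ^ (t + 1) + e := by
  induction t with
  | zero => simp
  | succ t ih =>
    have hqte : q ^ (t + 1) * e = 0 := by rw [pow_succ, mul_assoc, hqe, mul_zero]
    rw [pow_succ, ih, add_mul, mul_add, mul_add, hqte, heq, hee, ← pow_succ, add_zero, zero_add]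

theorem sum_range_succ_pow_sub (hpe : p * e = e) (hep : e * p = e) (hee : e * e = e) (T : ℕ) :
    ∑ t ∈ range (T + 1), (p ^ t - e) = ∑ t ∈ range (T + 1), (p - e) ^ t - e := by
  have hpow (t : ℕ) : p ^ (t + 1) - e = (p - e) ^ (t + 1) := by
    have := add_pow_succ_of_mul_eq_zero (q := p - e)
      (by rw [sub_mul, hpe, hee, sub_self]) (by rw [mul_sub, hep, hee, sub_self]) hee t
    rw [sub_add_cancel] at this
    rw [this, add_sub_cancel_right]
  rw [sum_range_succ', sum_range_succ']
  simp only [hpow, pow_zero]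
  abel

end Idempotent

theorem Matrix.mul_vecMulVec_one_of_sum_eq_one {ι R : Type*} [Fintype ι] [CommSemiring R]
    {P : Matrix ι ι R} (hP : ∀ i, ∑ j, P i j = 1) (v : ι → R) :
    P * vecMulVec 1 v = vecMulVec 1 v := by
  rw [mul_vecMulVec]
  congr 1
  ext i
  simp [mulVec, dotProduct, hP i]

theorem fundamental_matrix_series_general {n : ℕ}
    (P : Matrix (Fin n) (Fin n) ℝ)
    (hP_row : ∀ i, ∑ j, P i j = 1)
    (pv : Fin n → ℝ) (hpv_sum : ∑ i, pv i = 1)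
    (hpv_stat : Matrix.vecMul pv P = pv)
    (Z₀ : Matrix (Fin n) (Fin n) ℝ)
    (hconv : Tendsto
      (fun T : ℕ => ∑ t ∈ Finset.range (T + 1), (P ^ t - Matrix.of fun _ j => pv j))
      atTop (𝓝 Z₀)) :
    IsUnit (1 - P + Jmat n * Matrix.diagonal pv) ∧
      Z₀ = (1 - P + Jmat n * Matrix.diagonal pv)⁻¹ - Jmat n * Matrix.diagonal pv := by
  set E := vecMulVec 1 pv
  have hJ : Jmat n * diagonal pv = E := by ext; simp [Jmat, E]
  have hE : (of fun _ j => pv j) = E := by ext; simp [E]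
  have hPE : P * E = E := mul_vecMulVec_one_of_sum_eq_one hP_row pv
  have hEP : E * P = E := by rw [vecMulVec_mul, hpv_stat]
  have hEE : E * E = E := by rw [vecMulVec_mul_vecMulVec, dotProduct_one, hpv_sum, one_smul]
  have hgeom : Tendsto (fun T => ∑ t ∈ range T, (P - E) ^ t) atTop (𝓝 (Z₀ + E)) := by
    refine (tendsto_add_atTop_iff_nat 1).1 ?_
    rw [hE] at hconv
    simpa [sum_range_succ_pow_sub hPE hEP hEE] using hconv.add_const E
  have hinv : (1 - P + E) * (Z₀ + E) = 1 := by
    simpa only [sub_sub_eq_add_sub, add_sub_right_comm] using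
      one_sub_mul_eq_one_of_tendsto_geom_sum hgeom
  rw [hJ]
  exact ⟨.of_mul_eq_one _ hinv, by rw [inv_eq_right_inv hinv, add_sub_cancel_right]⟩

/-- if the partial sums `Σ_{t=0}^{T} (P^t − eπᵀ)` converge to `Z₀`, then
`I − P + JΠ` is invertible and `Z₀ = (I − P + JΠ)⁻¹ − JΠ`. -/
theorem fundamental_matrix_series {n : ℕ} (hn : 1 ≤ n)
    (P : Matrix (Fin n) (Fin n) ℝ)
    (hP_nonneg : ∀ i j, 0 ≤ P i j) (hP_row : ∀ i, ∑ j, P i j = 1)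
    (pv : Fin n → ℝ) (hpv_pos : ∀ i, 0 < pv i) (hpv_sum : ∑ i, pv i = 1)
    (hpv_stat : Matrix.vecMul pv P = pv)
    (Z₀ : Matrix (Fin n) (Fin n) ℝ)
    (hconv : Tendsto
      (fun T : ℕ => ∑ t ∈ Finset.range (T + 1), (P ^ t - Matrix.of fun _ j => pv j))
      atTop (𝓝 Z₀)) :
    IsUnit (1 - P + Jmat n * Matrix.diagonal pv) ∧
      Z₀ = (1 - P + Jmat n * Matrix.diagonal pv)⁻¹ - Jmat n * Matrix.diagonal pv :=
  fundamental_matrix_series_general P hP_row pv hpv_sum hpv_stat Z₀ hconv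
end

section
/- For every vector x ∈ ℝ^n, |xᵀ(Π^{1/2} P Π^{-1/2})x| ≤ xᵀx; that is, the Rayleigh quotient of the matrix Π^{1/2} P Π^{-1/2} (and hence of its symmetrization (Π^{1/2}PΠ^{-1/2} + Π^{-1/2}PᵀΠ^{1/2})/2) is bounded in absolute value by 1. -/
/-!
Writing `D = diag(√π)`, the quadratic form of `D P D⁻¹` is
`∑ i j, P i j * x i * (√π_i / √π_j) * x j`. By AM-GM each term is at most
`P i j * (x i ^ 2 + (π_i / π_j) * x j ^ 2) / 2`; summing, the row sums of `P` turn the first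
half into `∑ x i ^ 2 / 2` and stationarity `πᵀ P = πᵀ` turns the second half into the same.
The symmetrization has the same quadratic form, since `xᵀ Aᵀ x = xᵀ A x`.
-/

open Matrix Finset Filter Topology

lemma abs_mul_sqrt_div_sqrt_mul_le {a b : ℝ} (ha : 0 ≤ a) (hb : 0 ≤ b) (u v : ℝ) :
    |u * (√a / √b * v)| ≤ (u ^ 2 + a / b * v ^ 2) / 2 := by
  have hsq : (√a / √b * v) ^ 2 = a / b * v ^ 2 := by
    rw [mul_pow, div_pow, Real.sq_sqrt ha, Real.sq_sqrt hb]
  have h := two_mul_le_add_sq |u| |√a / √b * v|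
  rw [sq_abs, sq_abs, hsq] at h
  rw [abs_mul]
  linarith

section Stochastic

variable {ι : Type*} [Fintype ι]

lemma sum_sum_mul_eq_of_row_sum_eq_one {R : Type*} [NonAssocSemiring R] {P : Matrix ι ι R}
    (hP_row : ∀ i, ∑ j, P i j = 1) (f : ι → R) :
    ∑ i, ∑ j, P i j * f i = ∑ i, f i := by
  simp only [← Finset.sum_mul, hP_row, one_mul]

lemma sum_sum_mul_div_mul_eq_of_vecMul_eq {K : Type*} [Field K] {P : Matrix ι ι K} {p : ι → K}
    (hp : ∀ i, p i ≠ 0) (hp_stat : p ᵥ* P = p) (g : ι → K) :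
    ∑ i, ∑ j, P i j * (p i / p j) * g j = ∑ j, g j := by
  rw [Finset.sum_comm]
  refine Finset.sum_congr rfl fun j _ => ?_
  have hcol : ∑ i, p i * P i j = p j := by
    simpa [vecMul, dotProduct] using congrFun hp_stat j
  calc ∑ i, P i j * (p i / p j) * g j = (∑ i, p i * P i j) * (g j / p j) := by
        rw [Finset.sum_mul]
        exact Finset.sum_congr rfl fun i _ => by ring
    _ = g j := by rw [hcol, mul_div_cancel₀ _ (hp j)]

theorem abs_dotProduct_diagonal_sqrt_conj_mulVec_le [DecidableEq ι] {P : Matrix ι ι ℝ}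
    (hP_nonneg : ∀ i j, 0 ≤ P i j) (hP_row : ∀ i, ∑ j, P i j = 1)
    {p : ι → ℝ} (hp_pos : ∀ i, 0 < p i) (hp_stat : p ᵥ* P = p) (x : ι → ℝ) :
    |x ⬝ᵥ (diagonal (fun i => √(p i)) * P * diagonal (fun i => (√(p i))⁻¹)) *ᵥ x| ≤ x ⬝ᵥ x := by
  have hform : x ⬝ᵥ (diagonal (fun i => √(p i)) * P * diagonal (fun i => (√(p i))⁻¹)) *ᵥ x
      = ∑ i, ∑ j, P i j * (x i * (√(p i) / √(p j) * x j)) := by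
    simp only [dotProduct, mulVec, mul_diagonal, diagonal_mul, Finset.mul_sum]
    refine Finset.sum_congr rfl fun i _ => Finset.sum_congr rfl fun j _ => ?_
    ring
  rw [hform]
  calc |∑ i, ∑ j, P i j * (x i * (√(p i) / √(p j) * x j))|
      ≤ ∑ i, ∑ j, P i j * |x i * (√(p i) / √(p j) * x j)| := by
        refine (abs_sum_le_sum_abs _ _).trans (Finset.sum_le_sum fun i _ => ?_)
        refine (abs_sum_le_sum_abs _ _).trans_eq (Finset.sum_congr rfl fun j _ => ?_)
        rw [abs_mul, abs_of_nonneg (hP_nonneg i j)]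
    _ ≤ ∑ i, ∑ j, P i j * ((x i ^ 2 + p i / p j * x j ^ 2) / 2) := by
        gcongr with i _ j _
        · exact hP_nonneg i j
        · exact abs_mul_sqrt_div_sqrt_mul_le (hp_pos i).le (hp_pos j).le _ _
    _ = (∑ i, ∑ j, P i j * x i ^ 2 + ∑ i, ∑ j, P i j * (p i / p j) * x j ^ 2) / 2 := by
        simp only [← Finset.sum_add_distrib, Finset.sum_div]
        refine Finset.sum_congr rfl fun i _ => Finset.sum_congr rfl fun j _ => ?_
        ring
    _ = x ⬝ᵥ x := by
        rw [sum_sum_mul_eq_of_row_sum_eq_one hP_row,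
          sum_sum_mul_div_mul_eq_of_vecMul_eq (fun i => (hp_pos i).ne') hp_stat]
        simp only [dotProduct, sq]
        ring

end Stochastic

lemma dotProduct_half_smul_add_transpose_mulVec {ι K : Type*} [Fintype ι] [Field K]
    [NeZero (2 : K)] (A : Matrix ι ι K) (x : ι → K) :
    x ⬝ᵥ ((1 / 2 : K) • (A + Aᵀ)) *ᵥ x = x ⬝ᵥ A *ᵥ x := by
  rw [smul_mulVec, add_mulVec, dotProduct_smul, dotProduct_add, dotProduct_transpose_mulVec,
    smul_eq_mul, ← two_mul, ← mul_assoc, one_div_mul_cancel (NeZero.ne 2), one_mul]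

lemma Pih_mul_mul_Pinvh_transpose (n : ℕ) (pv : Fin n → ℝ) (P : Matrix (Fin n) (Fin n) ℝ) :
    (Pih n pv * P * Pinvh n pv)ᵀ = Pinvh n pv * Pᵀ * Pih n pv := by
  simp only [Pih, Pinvh, transpose_mul, diagonal_transpose, Matrix.mul_assoc]

theorem rayleigh_quotient_bounded_general {n : ℕ}
    (P : Matrix (Fin n) (Fin n) ℝ)
    (hP_nonneg : ∀ i j, 0 ≤ P i j) (hP_row : ∀ i, ∑ j, P i j = 1)
    (pv : Fin n → ℝ) (hpv_pos : ∀ i, 0 < pv i)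
    (hpv_stat : Matrix.vecMul pv P = pv) :
    ∀ x : Fin n → ℝ,
      |x ⬝ᵥ (Pih n pv * P * Pinvh n pv).mulVec x| ≤ x ⬝ᵥ x ∧
      |x ⬝ᵥ ((1 / 2 : ℝ) •
        (Pih n pv * P * Pinvh n pv + Pinvh n pv * Pᵀ * Pih n pv)).mulVec x| ≤ x ⬝ᵥ x := by
  intro x
  have hbound : |x ⬝ᵥ (Pih n pv * P * Pinvh n pv).mulVec x| ≤ x ⬝ᵥ x :=
    abs_dotProduct_diagonal_sqrt_conj_mulVec_le hP_nonneg hP_row hpv_pos hpv_stat x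
  refine ⟨hbound, ?_⟩
  rwa [← Pih_mul_mul_Pinvh_transpose, dotProduct_half_smul_add_transpose_mulVec]

/-- the Rayleigh quotient of `Π^{1/2} P Π^{-1/2}` (and hence of its
symmetrization) is bounded in absolute value by 1. -/
theorem rayleigh_quotient_bounded {n : ℕ} (hn : 1 ≤ n)
    (P : Matrix (Fin n) (Fin n) ℝ)
    (hP_nonneg : ∀ i j, 0 ≤ P i j) (hP_row : ∀ i, ∑ j, P i j = 1)
    (pv : Fin n → ℝ) (hpv_pos : ∀ i, 0 < pv i) (hpv_sum : ∑ i, pv i = 1)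
    (hpv_stat : Matrix.vecMul pv P = pv) :
    ∀ x : Fin n → ℝ,
      |x ⬝ᵥ (Pih n pv * P * Pinvh n pv).mulVec x| ≤ x ⬝ᵥ x ∧
      |x ⬝ᵥ ((1 / 2 : ℝ) •
        (Pih n pv * P * Pinvh n pv + Pinvh n pv * Pᵀ * Pih n pv)).mulVec x| ≤ x ⬝ᵥ x :=
  rayleigh_quotient_bounded_general P hP_nonneg hP_row pv hpv_pos hpv_stat
end

section
/- Let 𝒯 := D⁻¹ − (1/2)(Π^{1/2}PΠ^{-1/2} + Π^{-1/2}PᵀΠ^{1/2}). If λ ∈ ℝ and v ∈ ℝ^n with v ≠ 0 satisfy 𝒯v = λv, then 1/d_max − 1 ≤ λ ≤ 1/d_min + 1, where d_max and d_min denote the largest and smallest diagonal entries of D respectively. -/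
open Matrix Finset Filter Topology

/-- Quadratic form of a diagonal-sandwiched matrix. -/
lemma quad_form_sandwich {n : ℕ} (a b : Fin n → ℝ) (M : Matrix (Fin n) (Fin n) ℝ)
    (v : Fin n → ℝ) :
    v ⬝ᵥ (Matrix.diagonal a * M * Matrix.diagonal b).mulVec v
      = ∑ i, ∑ j, a i * M i j * b j * (v i * v j) := by
  simp only [dotProduct, Matrix.mulVec, dotProduct,
    Matrix.mul_diagonal, Matrix.diagonal_mul]
  rw [Finset.sum_congr rfl]
  intro i _
  rw [Finset.mul_sum]
  refine Finset.sum_congr rfl fun j _ => by ring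

/-- real eigenvalues of `𝒯 = D⁻¹ − (1/2)(Π^{1/2}PΠ^{-1/2} + Π^{-1/2}PᵀΠ^{1/2})`
satisfy `1/d_max − 1 ≤ λ ≤ 1/d_min + 1`. -/
theorem diglacian_eigenvalue_bounds {n : ℕ} (hn : 1 ≤ n)
    (P : Matrix (Fin n) (Fin n) ℝ)
    (hP_nonneg : ∀ i j, 0 ≤ P i j) (hP_row : ∀ i, ∑ j, P i j = 1)
    (pv : Fin n → ℝ) (hpv_pos : ∀ i, 0 < pv i) (hpv_sum : ∑ i, pv i = 1)
    (hpv_stat : Matrix.vecMul pv P = pv)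
    (d : Fin n → ℝ) (hd_pos : ∀ i, 0 < d i)
    (lam : ℝ) (v : Fin n → ℝ) (hv : v ≠ 0)
    (heig : ((Matrix.diagonal d)⁻¹ - (1 / 2 : ℝ) •
      (Pih n pv * P * Pinvh n pv + Pinvh n pv * Pᵀ * Pih n pv)).mulVec v = lam • v) :
    1 / (Finset.univ.sup' (Finset.univ_nonempty_iff.mpr ⟨⟨0, hn⟩⟩) d) - 1 ≤ lam ∧
      lam ≤ 1 / (Finset.univ.inf' (Finset.univ_nonempty_iff.mpr ⟨⟨0, hn⟩⟩) d) + 1 := by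
  have ne : (Finset.univ : Finset (Fin n)).Nonempty := ⟨⟨0, hn⟩, Finset.mem_univ _⟩
  set dM := Finset.univ.sup' (Finset.univ_nonempty_iff.mpr ⟨⟨0, hn⟩⟩) d with hdM
  set dm := Finset.univ.inf' (Finset.univ_nonempty_iff.mpr ⟨⟨0, hn⟩⟩) d with hdm
  -- basic positivity of dM, dm
  have hdM_pos : 0 < dM := lt_of_lt_of_le (hd_pos ⟨0, hn⟩)
    (Finset.le_sup' d (Finset.mem_univ _))
  have hdm_pos : 0 < dm := by
    obtain ⟨i, _, hi⟩ := Finset.exists_mem_eq_inf' ne d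
    rw [hdm, hi]; exact hd_pos i
  set N := ∑ i, v i ^ 2 with hN
  have hN_pos : 0 < N := by
    obtain ⟨i, hi⟩ := Function.ne_iff.mp hv
    exact Finset.sum_pos' (fun j _ => sq_nonneg _)
      ⟨i, Finset.mem_univ i, pow_two_pos_of_ne_zero hi⟩
  -- the quadratic form Q
  set Q := ∑ i, ∑ j, Real.sqrt (pv i) * P i j * (Real.sqrt (pv j))⁻¹ * (v i * v j) with hQ
  -- inverse of diagonal d
  have hinv : (Matrix.diagonal d)⁻¹ = Matrix.diagonal (fun i => (d i)⁻¹) := by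
    apply Matrix.inv_eq_right_inv
    rw [Matrix.diagonal_mul_diagonal]
    have : (fun i => d i * (d i)⁻¹) = fun _ : Fin n => (1 : ℝ) :=
      funext fun i => mul_inv_cancel₀ (hd_pos i).ne'
    rw [this]
    exact Matrix.diagonal_one
  -- Cauchy–Schwarz bound: Q^2 ≤ N^2
  have hQsq : Q ^ 2 ≤ N ^ 2 := by
    have cs := Finset.sum_mul_sq_le_sq_mul_sq (Finset.univ : Finset (Fin n × Fin n))
      (fun p => Real.sqrt (P p.1 p.2) * v p.1)
      (fun p => Real.sqrt (P p.1 p.2) * Real.sqrt (pv p.1) * (Real.sqrt (pv p.2))⁻¹ * v p.2)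
    have e1 : ∑ p : Fin n × Fin n,
        (Real.sqrt (P p.1 p.2) * v p.1) *
        (Real.sqrt (P p.1 p.2) * Real.sqrt (pv p.1) * (Real.sqrt (pv p.2))⁻¹ * v p.2) = Q := by
      rw [hQ, Fintype.sum_prod_type]
      refine Finset.sum_congr rfl fun i _ => Finset.sum_congr rfl fun j _ => ?_
      have : Real.sqrt (P i j) * Real.sqrt (P i j) = P i j :=
        Real.mul_self_sqrt (hP_nonneg i j)
      linear_combination (v i * v j * Real.sqrt (pv i) * (Real.sqrt (pv j))⁻¹) * this
    have e2 : ∑ p : Fin n × Fin n, (Real.sqrt (P p.1 p.2) * v p.1) ^ 2 = N := by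
      rw [hN, Fintype.sum_prod_type]
      refine Finset.sum_congr rfl fun i _ => ?_
      have : ∀ j, (Real.sqrt (P i j) * v i) ^ 2 = P i j * v i ^ 2 := fun j => by
        rw [mul_pow, Real.sq_sqrt (hP_nonneg i j)]
      simp only [this]
      rw [← Finset.sum_mul, hP_row i, one_mul]
    have e3 : ∑ p : Fin n × Fin n,
        (Real.sqrt (P p.1 p.2) * Real.sqrt (pv p.1) * (Real.sqrt (pv p.2))⁻¹ * v p.2) ^ 2
        = N := by
      rw [hN, Fintype.sum_prod_type_right]
      refine Finset.sum_congr rfl fun j _ => ?_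
      have hpj := hpv_pos j
      have : ∀ i, (Real.sqrt (P i j) * Real.sqrt (pv i) * (Real.sqrt (pv j))⁻¹ * v j) ^ 2
          = (pv i * P i j) * ((pv j)⁻¹ * v j ^ 2) := fun i => by
        have h1 : Real.sqrt (P i j) ^ 2 = P i j := Real.sq_sqrt (hP_nonneg i j)
        have h2 : Real.sqrt (pv i) ^ 2 = pv i := Real.sq_sqrt (hpv_pos i).le
        have h3 : ((Real.sqrt (pv j))⁻¹) ^ 2 = (pv j)⁻¹ := by
          rw [inv_pow, Real.sq_sqrt hpj.le]
        calc (Real.sqrt (P i j) * Real.sqrt (pv i) * (Real.sqrt (pv j))⁻¹ * v j) ^ 2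
            = Real.sqrt (P i j) ^ 2 * Real.sqrt (pv i) ^ 2 * ((Real.sqrt (pv j))⁻¹) ^ 2
              * v j ^ 2 := by ring
          _ = (pv i * P i j) * ((pv j)⁻¹ * v j ^ 2) := by rw [h1, h2, h3]; ring
      simp only [this]
      rw [← Finset.sum_mul]
      have hst : ∑ i, pv i * P i j = pv j := by
        have := congrFun hpv_stat j
        simpa [Matrix.vecMul, dotProduct] using this
      rw [hst]
      field_simp
    rw [e1, e2, e3] at cs
    calc Q ^ 2 ≤ N * N := cs
      _ = N ^ 2 := (sq N).symm
  have hQabs : -N ≤ Q ∧ Q ≤ N := by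
    constructor <;> nlinarith [hQsq, hN_pos]
  -- compute lam * N
  have hsym : v ⬝ᵥ (Pinvh n pv * Pᵀ * Pih n pv).mulVec v = Q := by
    rw [Pinvh, Pih, quad_form_sandwich, hQ]
    rw [Finset.sum_comm]
    refine Finset.sum_congr rfl fun j _ => Finset.sum_congr rfl fun i _ => ?_
    simp only [Matrix.transpose_apply]
    ring
  have hA : v ⬝ᵥ (Pih n pv * P * Pinvh n pv).mulVec v = Q := by
    rw [Pih, Pinvh, quad_form_sandwich, hQ]
  have hD : v ⬝ᵥ ((Matrix.diagonal d)⁻¹).mulVec v = ∑ i, (d i)⁻¹ * v i ^ 2 := by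
    rw [hinv]
    simp only [dotProduct, Matrix.mulVec_diagonal]
    exact Finset.sum_congr rfl fun i _ => by ring
  have key : (∑ i, (d i)⁻¹ * v i ^ 2) - Q = lam * N := by
    have h := congrArg (fun w => v ⬝ᵥ w) heig
    simp only [Matrix.sub_mulVec, Matrix.smul_mulVec, Matrix.add_mulVec,
      dotProduct_sub, dotProduct_smul, dotProduct_add] at h
    rw [hA, hsym, hD] at h
    have hvv : v ⬝ᵥ v = N := by
      simp only [dotProduct, hN, sq]
    rw [hvv] at h
    simp only [smul_eq_mul] at h
    linarith [h]
  -- bounds on the diagonal sum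
  have hTub : ∑ i, (d i)⁻¹ * v i ^ 2 ≤ dm⁻¹ * N := by
    rw [hN, Finset.mul_sum]
    refine Finset.sum_le_sum fun i _ => ?_
    have : dm ≤ d i := Finset.inf'_le d (Finset.mem_univ i)
    have h1 : (d i)⁻¹ ≤ dm⁻¹ := by
      exact inv_anti₀ hdm_pos this
    exact mul_le_mul_of_nonneg_right h1 (sq_nonneg _)
  have hTlb : dM⁻¹ * N ≤ ∑ i, (d i)⁻¹ * v i ^ 2 := by
    rw [hN, Finset.mul_sum]
    refine Finset.sum_le_sum fun i _ => ?_
    have : d i ≤ dM := Finset.le_sup' d (Finset.mem_univ i)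
    have h1 : dM⁻¹ ≤ (d i)⁻¹ := inv_anti₀ (hd_pos i) this
    exact mul_le_mul_of_nonneg_right h1 (sq_nonneg _)
  constructor
  · rw [one_div]
    have e : (dM⁻¹ - 1) * N = dM⁻¹ * N - N := by ring
    have h1 : (dM⁻¹ - 1) * N ≤ lam * N := by
      rw [e]; linarith [hTlb, hQabs.2, key]
    exact le_of_mul_le_mul_right h1 hN_pos
  · rw [one_div]
    have e : (dm⁻¹ + 1) * N = dm⁻¹ * N + N := by ring
    have h1 : lam * N ≤ (dm⁻¹ + 1) * N := by
      rw [e]; linarith [hTub, hQabs.1, key]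
    exact le_of_mul_le_mul_right h1 hN_pos
end
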